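/- The coefficients n_λ(μ) (μ ∈ Π⁺(λ), λ ∈ Λ⁺) uniquely determine the structure constants n^λ_{μ,ν}, and conversely in type A_l: if two families {f_λ} and {f'_λ} of the given form have the same structure constants n^λ_{μ,ν} = n'^λ_{μ,ν} for all dominant λ, μ, ν, then f_λ = f'_λ for all λ. -/

import Mathlib

/-!
STATEMENT 12: In type `A_l`, the coefficients `n_λ(μ)` of a family
`f_λ = Σ_{x∈Π(λ)} n_λ(x) e(x)` uniquely determine the structure constants
`n^λ_{μ,ν}` (defined by `f_μ · f_ν = Σ_λ n^λ_{μ,ν} f_λ`), and conversely: if two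
families `{f_λ}` and `{f'_λ}` of the given form have the same structure constants,
then `f_λ = f'_λ` for all dominant `λ`.

Model: the weight lattice of `A_l` in fundamental-weight coordinates `Fin l → ℤ`
(`ω_i` the standard basis vectors, `α_j` the columns of the Cartan matrix), with the
Weyl group generated by the simple reflections `s_j(v) = v - v_j α_j` acting on
`ℤ[Λ] = AddMonoidAlgebra ℤ (Fin l → ℤ)` by `mapDomain`.  Each family member `f_λ`
(`λ ∈ Λ⁺`) is Weyl-invariant with `n_λ(λ) = 1` and support in the saturated set
`Π(λ)`; `huniq` records the (true) fact that each Weyl orbit contains at most one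
dominant weight.  The structure constants are given as finitely supported functions
`n μ ν : Λ⁺ →₀ ℤ` via the expansion hypotheses `hn`, `hn'`.
-/

abbrev WeightA (l : ℕ) := Fin l → ℤ

def sr (l : ℕ) (j : Fin l) : WeightA l := fun k =>
  if k = j then 2 else if (k : ℤ) = (j : ℤ) + 1 ∨ (j : ℤ) = (k : ℤ) + 1 then -1 else 0

def IsDominant (l : ℕ) (lam : WeightA l) : Prop := ∀ i, 0 ≤ lam i

/-- The dominant weights `Λ⁺`, as a subtype. -/
abbrev Dom (l : ℕ) := {v : WeightA l // IsDominant l v}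

def DomLe (l : ℕ) (μ lam : WeightA l) : Prop :=
  ∃ c : Fin l → ℕ, lam - μ = ∑ j, (c j : ℤ) • sr l j

/-- The simple reflection `s_j`. -/
def reflect (l : ℕ) (j : Fin l) (v : WeightA l) : WeightA l := v - v j • sr l j

/-- `y` lies in the Weyl orbit `W·x`. -/
def SameOrbit (l : ℕ) (x y : WeightA l) : Prop :=
  Relation.ReflTransGen (fun a b => ∃ j, b = reflect l j a) x y

/-- The saturated weight set `Π(λ)`. -/
def SatSet (l : ℕ) (lam : WeightA l) : Set (WeightA l) :=
  {x | ∃ μ, IsDominant l μ ∧ DomLe l μ lam ∧ SameOrbit l μ x}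


/-!
Two integral functionals organise the weights: `height`, twice the sum of the simple-root
coordinates, and the `ε`-coordinates `eps` of `𝔤𝔩_{l+1}`, which the simple reflections permute by
adjacent transpositions. A decreasing sequence majorises its rearrangements, so every weight in
the Weyl orbit of a dominant `μ` lies below `μ` in the dominance order, and
`f_λ = e(λ) + (lower terms)`. Hence the `f_λ` are linearly independent, which gives the first
implication, and `f_μ f_ν = f_{μ+ν} + ∑_{κ < μ+ν} n^κ_{μ,ν} f_κ`. For the converse, `0` and the
`ω_i` are minimal among dominant weights, so for them `f_λ` is the orbit sum of `λ`; every other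
dominant `λ` splits as `ω_i + (λ - ω_i)`, and the displayed identity determines `f_λ` by
induction on the height.
-/

namespace TypeA

variable {l : ℕ}

def pairing (l : ℕ) (w : ℤ → ℤ) : WeightA l →ₗ[ℤ] ℤ :=
  Fintype.linearCombination ℤ fun m : Fin l => w m

lemma pairing_apply (w : ℤ → ℤ) (v : WeightA l) : pairing l w v = ∑ m, v m * w m := by
  simp [pairing, Fintype.linearCombination_apply]

lemma sum_ite_coe_eq (g : ℤ → ℤ) (t : ℤ) :
    ∑ m : Fin l, (if (m : ℤ) = t then g m else 0) = if 0 ≤ t ∧ t < l then g t else 0 := by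
  split_ifs with ht
  · lift t to ℕ using ht.1
    rw [Finset.sum_eq_single ⟨t, by omega⟩
      (fun m _ hm => if_neg fun h => hm (Fin.ext (by simpa using h))) (by simp)]
    simp
  · exact Finset.sum_eq_zero fun m _ => if_neg fun h => ht ⟨by omega, by omega⟩

lemma sr_apply (j m : Fin l) :
    sr l j m = 2 * (if (m : ℤ) = j then 1 else 0) - (if (m : ℤ) = j + 1 then 1 else 0)
      - (if (m : ℤ) = j - 1 then 1 else 0) := by
  simp only [sr, Fin.ext_iff]
  split_ifs <;> omega

/-- `α_j = 2 ω_j - ω_{j-1} - ω_{j+1}`, where the missing neighbours at the two ends do no harm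
because `w` vanishes at `-1` and `l`. -/
lemma pairing_sr {w : ℤ → ℤ} (h₀ : w (-1) = 0) (hl : w l = 0) (j : Fin l) :
    pairing l w (sr l j) = 2 * w j - w (j - 1) - w (j + 1) := by
  simp only [pairing_apply, sr_apply, sub_mul, mul_assoc, ite_mul, one_mul, zero_mul,
    Finset.sum_sub_distrib, ← Finset.mul_sum, sum_ite_coe_eq]
  have extend : ∀ t : ℤ, -1 ≤ t → t ≤ l → (if 0 ≤ t ∧ t < l then w t else 0) = w t := by
    intro t ht₁ ht₂
    split_ifs with ht
    · rfl
    · rcases (by omega : t = -1 ∨ t = l) with rfl | rfl <;> simp [h₀, hl]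
  have hj := j.isLt
  rw [extend _ (by omega) (by omega), extend _ (by omega) (by omega),
    extend _ (by omega) (by omega)]
  ring

/-- Twice the sum of the coordinates in the basis of simple roots. -/
def height (l : ℕ) : WeightA l →ₗ[ℤ] ℤ := pairing l fun m => (m + 1) * (l - m)

lemma height_sr (j : Fin l) : height l (sr l j) = 2 := by
  rw [height, pairing_sr (by ring) (by ring)]
  ring

/-- The coordinates of a weight in the basis `ε_0, …, ε_l` of `𝔤𝔩_{l+1}` (so `ω_j = ε_0 + ⋯ + ε_j`),
normalised to sum zero and scaled by `l + 1` to be integral. -/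
def eps (l : ℕ) (k : Fin (l + 1)) : WeightA l →ₗ[ℤ] ℤ :=
  pairing l fun m => (if (k : ℤ) ≤ m then (l + 1 : ℤ) else 0) - (m + 1)

lemma eps_sr (k : Fin (l + 1)) (j : Fin l) :
    eps l k (sr l j) =
      (l + 1) * ((if k = j.castSucc then 1 else 0) - (if k = j.succ then 1 else 0)) := by
  have hk := k.isLt
  rw [eps, pairing_sr (by split_ifs <;> omega) (by split_ifs <;> omega)]
  simp only [Fin.ext_iff, Fin.val_castSucc, Fin.val_succ]
  split_ifs <;> push_cast at * <;> omega

lemma eps_castSucc_sub_eps_succ (j : Fin l) (v : WeightA l) :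
    eps l j.castSucc v - eps l j.succ v = (l + 1) * v j := by
  simp only [eps, pairing_apply, ← Finset.sum_sub_distrib, ← mul_sub]
  rw [Finset.sum_eq_single j (fun m _ hm => ?_) (by simp)]
  · simp only [Fin.val_castSucc, Fin.val_succ, le_refl, if_true]
    push_cast
    split_ifs <;> first | omega | ring
  · have : (m : ℕ) ≠ j := fun h => hm (Fin.ext h)
    simp only [Fin.val_castSucc, Fin.val_succ]
    split_ifs <;> omega

lemma eps_reflect (j : Fin l) (v : WeightA l) (k : Fin (l + 1)) :
    eps l k (reflect l j v) = eps l (Equiv.swap j.castSucc j.succ k) v := by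
  have hdiff := eps_castSucc_sub_eps_succ j v
  rw [reflect, map_sub, map_zsmul, eps_sr, smul_eq_mul]
  rcases eq_or_ne k j.castSucc with rfl | h₁
  · rw [Equiv.swap_apply_left, if_pos rfl, if_neg Fin.castSucc_lt_succ.ne]
    linarith
  rcases eq_or_ne k j.succ with rfl | h₂
  · rw [Equiv.swap_apply_right, if_neg h₁, if_pos rfl]
    linarith
  · rw [Equiv.swap_apply_of_ne_of_ne h₁ h₂, if_neg h₁, if_neg h₂]
    ring

lemma antitone_eps_of_isDominant {μ : WeightA l} (hμ : IsDominant l μ) :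
    Antitone fun k => eps l k μ := by
  refine Fin.antitone_iff_succ_le.mpr fun j => ?_
  have := eps_castSucc_sub_eps_succ j μ
  have := hμ j
  nlinarith

lemma sum_Iic_eps_sum_smul_sr (d : Fin l → ℤ) (i : Fin l) :
    ∑ k ∈ Finset.Iic i.castSucc, eps l k (∑ j, d j • sr l j) = (l + 1) * d i := by
  simp only [map_sum, map_zsmul, eps_sr, smul_eq_mul]
  rw [Finset.sum_comm]
  simp only [← Finset.mul_sum, Finset.sum_sub_distrib, Finset.sum_ite_eq', Finset.mem_Iic]
  rw [Finset.sum_eq_single i (fun j _ hj => ?_) (by simp)]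
  · simp [mul_comm]
  · simp only [Fin.castSucc_le_castSucc_iff, Fin.succ_le_castSucc_iff]
    rw [if_congr hj.le_iff_lt rfl rfl, sub_self, mul_zero, mul_zero]

lemma height_lt_of_domLe {x μ : WeightA l} (h : DomLe l x μ) (hne : x ≠ μ) :
    height l x < height l μ := by
  obtain ⟨c, hc⟩ := h
  obtain ⟨j, hj⟩ : ∃ j, c j ≠ 0 := by
    by_contra! hc₀
    exact hne (sub_eq_zero.mp (by simp [hc, hc₀])).symm
  have : height l (μ - x) = ∑ j, (c j : ℤ) * 2 := by
    simp only [hc, map_sum, map_zsmul, height_sr, smul_eq_mul]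
  rw [map_sub] at this
  have : 0 < ∑ j, (c j : ℤ) * 2 :=
    Finset.sum_pos' (fun j _ => by positivity) ⟨j, Finset.mem_univ j, by omega⟩
  linarith

lemma height_le_of_domLe {x μ : WeightA l} (h : DomLe l x μ) : height l x ≤ height l μ := by
  rcases eq_or_ne x μ with rfl | hne
  · rfl
  · exact (height_lt_of_domLe h hne).le

lemma domLe_trans {x y z : WeightA l} (h₁ : DomLe l x y) (h₂ : DomLe l y z) : DomLe l x z := by
  obtain ⟨c, hc⟩ := h₁
  obtain ⟨d, hd⟩ := h₂
  refine ⟨c + d, ?_⟩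
  simp only [Pi.add_apply, Nat.cast_add, add_smul, Finset.sum_add_distrib, ← hc, ← hd]
  abel

lemma domLe_add {x μ y ν : WeightA l} (h₁ : DomLe l x μ) (h₂ : DomLe l y ν) :
    DomLe l (x + y) (μ + ν) := by
  obtain ⟨c, hc⟩ := h₁
  obtain ⟨d, hd⟩ := h₂
  refine ⟨c + d, ?_⟩
  simp only [Pi.add_apply, Nat.cast_add, add_smul, Finset.sum_add_distrib, ← hc, ← hd]
  abel

lemma domLe_antisymm {x μ : WeightA l} (h₁ : DomLe l x μ) (h₂ : DomLe l μ x) : x = μ := by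
  by_contra hne
  exact (height_lt_of_domLe h₁ hne).not_ge (height_le_of_domLe h₂)

lemma height_nonneg_of_isDominant {μ : WeightA l} (hμ : IsDominant l μ) : 0 ≤ height l μ := by
  rw [height, pairing_apply]
  exact Finset.sum_nonneg fun m _ => mul_nonneg (hμ m) (by have := m.isLt; nlinarith)

lemma height_pos_of_isDominant {μ : WeightA l} (hμ : IsDominant l μ) (hne : μ ≠ 0) :
    0 < height l μ := by
  obtain ⟨m, hm⟩ : ∃ m, μ m ≠ 0 := by
    by_contra! h
    exact hne (funext h)
  rw [height, pairing_apply]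
  have hw : ∀ m : Fin l, (0 : ℤ) < ((m : ℤ) + 1) * (l - m) := fun m => by
    have := m.isLt
    nlinarith
  exact Finset.sum_pos' (fun m _ => mul_nonneg (hμ m) (hw m).le)
    ⟨m, Finset.mem_univ m, mul_pos (lt_of_le_of_ne (hμ m) (Ne.symm hm)) (hw m)⟩

lemma sum_Iic_comp_perm_le {ι : Type*} [LinearOrder ι] [Fintype ι] [LocallyFiniteOrderBot ι]
    {s : ι → ℤ} (hs : Antitone s) (σ : Equiv.Perm ι) (a : ι) :
    ∑ k ∈ Finset.Iic a, s (σ k) ≤ ∑ k ∈ Finset.Iic a, s k := by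
  have hind : Antitone fun k : ι => if k ≤ a then (1 : ℤ) else 0 := fun k k' hkk' => by
    dsimp only
    split_ifs <;> first | omega | exact absurd (hkk'.trans ‹_›) ‹_›
  have := (hind.monovary hs).sum_smul_comp_perm_le_sum_smul (σ := σ)
  simpa [ite_smul, Finset.sum_ite, Finset.filter_ge_eq_Iic] using this

lemma exists_eq_sum_smul_sr_of_sameOrbit {μ x : WeightA l} (h : SameOrbit l μ x) :
    ∃ d : Fin l → ℤ, μ - x = ∑ j, d j • sr l j := by
  induction h with
  | refl => exact ⟨0, by simp⟩
  | @tail y _ _ hstep ih =>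
    obtain ⟨d, hd⟩ := ih
    obtain ⟨j, rfl⟩ := hstep
    refine ⟨d + Pi.single j (y j), ?_⟩
    rw [reflect, sub_sub_eq_add_sub, add_sub_right_comm, hd]
    simp [add_smul, Finset.sum_add_distrib, Pi.single_apply]

lemma exists_perm_eps_of_sameOrbit {μ x : WeightA l} (h : SameOrbit l μ x) :
    ∃ σ : Equiv.Perm (Fin (l + 1)), ∀ k, eps l k x = eps l (σ k) μ := by
  induction h with
  | refl => exact ⟨1, fun k => rfl⟩
  | tail _ hstep ih =>
    obtain ⟨σ, hσ⟩ := ih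
    obtain ⟨j, rfl⟩ := hstep
    exact ⟨σ * Equiv.swap j.castSucc j.succ, fun k => by rw [eps_reflect, hσ]; rfl⟩

/-- The Weyl group permutes the `ε`-coordinates, and a decreasing sequence majorises all of its
rearrangements. -/
lemma domLe_of_sameOrbit {μ x : WeightA l} (hμ : IsDominant l μ) (h : SameOrbit l μ x) :
    DomLe l x μ := by
  obtain ⟨d, hd⟩ := exists_eq_sum_smul_sr_of_sameOrbit h
  obtain ⟨σ, hσ⟩ := exists_perm_eps_of_sameOrbit h
  have hd_nonneg : ∀ i, 0 ≤ d i := fun i => by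
    have hsum := sum_Iic_eps_sum_smul_sr d i
    simp only [← hd, map_sub, Finset.sum_sub_distrib, hσ] at hsum
    have := sum_Iic_comp_perm_le (antitone_eps_of_isDominant hμ) σ i.castSucc
    nlinarith
  refine ⟨fun j => (d j).toNat, ?_⟩
  simp only [hd, Int.toNat_of_nonneg (hd_nonneg _)]

lemma domLe_of_mem_satSet {lam x : WeightA l} (hx : x ∈ SatSet l lam) : DomLe l x lam := by
  obtain ⟨μ, hμ, hμlam, hμx⟩ := hx
  exact domLe_trans (domLe_of_sameOrbit hμ hμx) hμlam

def IsMinimalDominant (l : ℕ) (lam : WeightA l) : Prop :=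
  ∀ μ, IsDominant l μ → DomLe l μ lam → μ = lam

lemma sameOrbit_of_mem_satSet {lam x : WeightA l} (hmin : IsMinimalDominant l lam)
    (hx : x ∈ SatSet l lam) :
    SameOrbit l lam x := by
  obtain ⟨μ, hμ, hμlam, hμx⟩ := hx
  rwa [← hmin μ hμ hμlam]

lemma isMinimalDominant_zero : IsMinimalDominant l 0 := fun μ hμ h => by
  by_contra hne
  have := height_lt_of_domLe h hne
  rw [map_zero] at this
  exact this.not_ge (height_nonneg_of_isDominant hμ)

lemma eq_zero_or_eq_single_of_sum_le_one {ι : Type*} [Fintype ι] [DecidableEq ι] {v : ι → ℤ}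
    (hv : ∀ i, 0 ≤ v i) (hsum : ∑ i, v i ≤ 1) : v = 0 ∨ ∃ k, v = Pi.single k 1 := by
  rcases eq_or_ne v 0 with h | h
  · exact Or.inl h
  obtain ⟨k, hk⟩ : ∃ k, v k ≠ 0 := Function.ne_iff.mp h
  have hsplit := Finset.add_sum_erase _ v (Finset.mem_univ k)
  have hrest := Finset.sum_nonneg fun i (_ : i ∈ Finset.univ.erase k) => hv i
  have hk₁ : v k = 1 := by
    have := hv k
    omega
  have hrest₀ : ∀ i ∈ Finset.univ.erase k, v i = 0 :=
    (Finset.sum_eq_zero_iff_of_nonneg fun i _ => hv i).mp (by omega)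
  refine Or.inr ⟨k, funext fun i => ?_⟩
  rcases eq_or_ne i k with rfl | hik
  · simp [hk₁]
  · simp [hik, hrest₀ i (Finset.mem_erase.mpr ⟨hik, Finset.mem_univ i⟩)]

lemma sum_le_one_of_domLe_single {μ : WeightA l} {i : Fin l} (h : DomLe l μ (Pi.single i 1)) :
    ∑ m, μ m ≤ 1 := by
  obtain ⟨c, hc⟩ := h
  let w : ℤ → ℤ := fun m => if 0 ≤ m ∧ m < l then 1 else 0
  have hw : ∀ v : WeightA l, pairing l w v = ∑ m, v m := fun v => by
    simp [pairing_apply, w]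
  have hw_sr : ∀ j, 0 ≤ pairing l w (sr l j) := fun j => by
    rw [pairing_sr (by simp [w]) (by simp [w])]
    simp only [w]
    split_ifs <;> omega
  have key : ∑ m, (Pi.single i 1 : WeightA l) m - ∑ m, μ m =
      ∑ j, (c j : ℤ) * pairing l w (sr l j) := by
    rw [← hw, ← hw, ← map_sub, hc, map_sum]
    simp only [map_zsmul, smul_eq_mul]
  have := Finset.sum_nonneg fun j (_ : j ∈ Finset.univ) =>
    mul_nonneg (Nat.cast_nonneg (c j)) (hw_sr j)
  simp only [Finset.sum_pi_single', Finset.mem_univ, if_true] at key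
  linarith

lemma eps_zero_single (k : Fin l) : eps l 0 (Pi.single k 1) = l - k := by
  simp [eps, pairing_apply, Pi.single_apply]

/-- A dominant `μ ≤ ω_i` has `∑ μ ≤ 1`, so it is `0` or some `ω_k`; the `α_0`-coordinate of
`ω_i - μ` is `((l - i) - eps l 0 μ) / (l + 1)`, a nonnegative integer only for `μ = ω_i`. -/
lemma isMinimalDominant_single (i : Fin l) : IsMinimalDominant l (Pi.single i 1) := by
  intro μ hμ h
  have hi := i.isLt
  have hsum := sum_le_one_of_domLe_single h
  obtain ⟨c, hc⟩ := h
  have hIic : Finset.Iic (Fin.castSucc ⟨0, i.pos⟩ : Fin (l + 1)) = {0} := by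
    ext
    simp
  have hcoeff := sum_Iic_eps_sum_smul_sr (fun j => (c j : ℤ)) ⟨0, i.pos⟩
  rw [← hc, hIic, Finset.sum_singleton, map_sub, eps_zero_single] at hcoeff
  obtain ⟨c₀, hc₀, hcoeff⟩ : ∃ c₀ : ℤ, 0 ≤ c₀ ∧ l - i - eps l 0 μ = (l + 1) * c₀ :=
    ⟨_, by positivity, hcoeff⟩
  rcases eq_zero_or_eq_single_of_sum_le_one hμ hsum with rfl | ⟨k, rfl⟩ <;>
    simp only [map_zero, eps_zero_single] at hcoeff <;>
    rcases (by omega : c₀ = 0 ∨ 1 ≤ c₀) with rfl | hc₁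
  · omega
  · nlinarith
  · rw [Fin.ext (by omega : k.val = i.val)]
  · nlinarith [k.isLt]

lemma exists_add_of_not_isMinimalDominant {lam : WeightA l} (hlam : IsDominant l lam)
    (hmin : ¬ IsMinimalDominant l lam) :
    ∃ μ ν, IsDominant l μ ∧ IsDominant l ν ∧ μ ≠ 0 ∧ ν ≠ 0 ∧ μ + ν = lam := by
  obtain ⟨i, hi⟩ : ∃ i, lam i ≠ 0 := by
    by_contra! h
    exact hmin (funext h ▸ isMinimalDominant_zero)
  refine ⟨Pi.single i 1, lam - Pi.single i 1, fun k => ?_, fun k => ?_, ?_, ?_,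
    add_sub_cancel _ _⟩
  · simp only [Pi.single_apply]
    split_ifs <;> omega
  · have := hlam k
    simp only [Pi.sub_apply, Pi.single_apply]
    split_ifs with hk
    · subst hk; omega
    · omega
  · simp
  · intro h
    rw [sub_eq_zero] at h
    exact hmin (h ▸ isMinimalDominant_single i)

lemma reflect_involutive (j : Fin l) : Function.Involutive (reflect l j) := fun v => by
  simp only [reflect, Pi.sub_apply, Pi.smul_apply, smul_eq_mul, sr, if_true]
  module

lemma exists_maximal_domLe (s : Finset (Dom l)) (hs : s.Nonempty) :
    ∃ κ₀ ∈ s, ∀ κ ∈ s, DomLe l κ₀ κ → κ = κ₀ := by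
  obtain ⟨κ₀, hκ₀, hmax⟩ := s.exists_max_image (fun κ : Dom l => height l κ) hs
  refine ⟨κ₀, hκ₀, fun κ hκ hle => ?_⟩
  by_contra hne
  exact (height_lt_of_domLe hle fun h => hne (Subtype.ext h).symm).not_ge (hmax κ hκ)

section Characters

open AddMonoidAlgebra

lemma coeff_eq_of_sameOrbit {F : AddMonoidAlgebra ℤ (WeightA l)}
    (hW : ∀ j, Finsupp.mapDomain (reflect l j) F.coeff = F.coeff) {μ x : WeightA l}
    (h : SameOrbit l μ x) : F.coeff x = F.coeff μ := by
  induction h with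
  | refl => rfl
  | @tail y _ _ hstep ih =>
    obtain ⟨j, rfl⟩ := hstep
    calc F.coeff (reflect l j y) = Finsupp.mapDomain (reflect l j) F.coeff (reflect l j y) := by
          rw [hW j]
      _ = F.coeff μ := (Finsupp.mapDomain_apply (reflect_involutive j).injective _ _).trans ih

lemma eq_of_isMinimalDominant {lam : WeightA l} (hmin : IsMinimalDominant l lam)
    {F G : AddMonoidAlgebra ℤ (WeightA l)}
    (hWF : ∀ j, Finsupp.mapDomain (reflect l j) F.coeff = F.coeff)
    (hWG : ∀ j, Finsupp.mapDomain (reflect l j) G.coeff = G.coeff)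
    (hlead : F.coeff lam = G.coeff lam)
    (hsuppF : ∀ x, x ∉ SatSet l lam → F.coeff x = 0)
    (hsuppG : ∀ x, x ∉ SatSet l lam → G.coeff x = 0) : F = G := by
  refine AddMonoidAlgebra.ext (Finsupp.ext fun x => ?_)
  by_cases hx : x ∈ SatSet l lam
  · have hx := sameOrbit_of_mem_satSet hmin hx
    rw [coeff_eq_of_sameOrbit hWF hx, coeff_eq_of_sameOrbit hWG hx, hlead]
  · rw [hsuppF x hx, hsuppG x hx]

lemma coeff_mul_eq_zero_of_not_domLe {F G : AddMonoidAlgebra ℤ (WeightA l)} {μ ν κ : WeightA l}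
    (hF : ∀ x, F.coeff x ≠ 0 → DomLe l x μ) (hG : ∀ y, G.coeff y ≠ 0 → DomLe l y ν)
    (hκ : ¬ DomLe l κ (μ + ν)) : (F * G).coeff κ = 0 := by
  classical
  by_contra hne
  obtain ⟨x, hx, y, hy, rfl⟩ := Finset.mem_add.mp
    (support_coeff_mul_subset F G (Finsupp.mem_support_iff.mpr hne))
  exact hκ (domLe_add (hF x (Finsupp.mem_support_iff.mp hx))
    (hG y (Finsupp.mem_support_iff.mp hy)))

lemma coeff_mul_add_of_domLe {F G : AddMonoidAlgebra ℤ (WeightA l)} {μ ν : WeightA l}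
    (hF : ∀ x, F.coeff x ≠ 0 → DomLe l x μ) (hG : ∀ y, G.coeff y ≠ 0 → DomLe l y ν) :
    (F * G).coeff (μ + ν) = F.coeff μ * G.coeff ν := by
  refine coeff_mul_add_of_uniqueAdd fun x y hx hy hxy => ?_
  have hxμ := hF x (Finsupp.mem_support_iff.mp hx)
  have hyν := hG y (Finsupp.mem_support_iff.mp hy)
  have hheight := congrArg (height l) hxy
  simp only [map_add] at hheight
  have := height_le_of_domLe hxμ
  have := height_le_of_domLe hyν
  constructor <;> by_contra hne
  · have := height_lt_of_domLe hxμ hne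
    omega
  · have := height_lt_of_domLe hyν hne
    omega

variable {f : WeightA l → AddMonoidAlgebra ℤ (WeightA l)}

lemma domLe_of_coeff_ne_zero
    (hsupp : ∀ lam : Dom l, ∀ x, x ∉ SatSet l ↑lam → (f ↑lam).coeff x = 0)
    (lam : Dom l) (x : WeightA l) (hx : (f lam).coeff x ≠ 0) : DomLe l x lam :=
  domLe_of_mem_satSet (not_imp_comm.mp (hsupp lam x) hx)

lemma coeff_sum_smul_of_maximal (hlead : ∀ lam : Dom l, (f ↑lam).coeff ↑lam = 1)
    (hsupp : ∀ lam : Dom l, ∀ x, x ∉ SatSet l ↑lam → (f ↑lam).coeff x = 0)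
    (g : Dom l →₀ ℤ) {κ₀ : Dom l} (hmax : ∀ κ ∈ g.support, DomLe l κ₀ κ → κ = κ₀) :
    (g.sum fun κ z => z • f κ).coeff κ₀ = g κ₀ := by
  rw [coeff_finsuppSum, Finsupp.sum, Finset.sum_apply', Finset.sum_eq_single κ₀]
  · simp only [coeff_smul, Finsupp.smul_apply, hlead, smul_eq_mul, mul_one]
  · intro κ hκ hne
    have : (f κ).coeff κ₀ = 0 := by
      by_contra h
      exact hne (hmax κ hκ (domLe_of_coeff_ne_zero hsupp κ _ h))
    simp only [coeff_smul, Finsupp.smul_apply, this, smul_zero]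
  · simp +contextual

lemma eq_of_sum_smul_eq (hlead : ∀ lam : Dom l, (f ↑lam).coeff ↑lam = 1)
    (hsupp : ∀ lam : Dom l, ∀ x, x ∉ SatSet l ↑lam → (f ↑lam).coeff x = 0)
    {g g' : Dom l →₀ ℤ} (h : (g.sum fun κ z => z • f κ) = g'.sum fun κ z => z • f κ) :
    g = g' := by
  rw [← sub_eq_zero]
  by_contra hg
  obtain ⟨κ₀, hκ₀, hmax⟩ := exists_maximal_domLe _ (Finsupp.support_nonempty_iff.mpr hg)
  have := coeff_sum_smul_of_maximal hlead hsupp _ hmax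
  rw [Finsupp.sum_sub_index fun _ _ _ => sub_smul _ _ _, h, sub_self] at this
  exact Finsupp.mem_support_iff.mp hκ₀ (by simpa using this.symm)

lemma domLe_of_mem_support_structureConst (hlead : ∀ lam : Dom l, (f ↑lam).coeff ↑lam = 1)
    (hsupp : ∀ lam : Dom l, ∀ x, x ∉ SatSet l ↑lam → (f ↑lam).coeff x = 0)
    {n : Dom l → Dom l → (Dom l →₀ ℤ)}
    (hn : ∀ μ ν : Dom l, f ↑μ * f ↑ν = (n μ ν).sum fun lam z => z • f ↑lam)
    (μ ν : Dom l) {κ : Dom l} (hκ : κ ∈ (n μ ν).support) :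
    DomLe l κ (μ + ν : WeightA l) := by
  classical
  by_contra hκ'
  obtain ⟨κ₀, hκ₀, hmax⟩ := exists_maximal_domLe
    ((n μ ν).support.filter fun κ => ¬ DomLe l κ (μ + ν : WeightA l)) ⟨κ, by simp [hκ, hκ']⟩
  rw [Finset.mem_filter] at hκ₀
  have hmax' : ∀ κ ∈ (n μ ν).support, DomLe l κ₀ κ → κ = κ₀ := fun κ hκ hle =>
    hmax κ (Finset.mem_filter.mpr ⟨hκ, fun h => hκ₀.2 (domLe_trans hle h)⟩) hle
  have := coeff_sum_smul_of_maximal hlead hsupp _ hmax'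
  rw [← hn, coeff_mul_eq_zero_of_not_domLe (domLe_of_coeff_ne_zero hsupp μ)
    (domLe_of_coeff_ne_zero hsupp ν) hκ₀.2] at this
  exact Finsupp.mem_support_iff.mp hκ₀.1 this.symm

lemma structureConst_eq_one (hlead : ∀ lam : Dom l, (f ↑lam).coeff ↑lam = 1)
    (hsupp : ∀ lam : Dom l, ∀ x, x ∉ SatSet l ↑lam → (f ↑lam).coeff x = 0)
    {n : Dom l → Dom l → (Dom l →₀ ℤ)}
    (hn : ∀ μ ν : Dom l, f ↑μ * f ↑ν = (n μ ν).sum fun lam z => z • f ↑lam)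
    {μ ν lam : Dom l} (h : (μ + ν : WeightA l) = lam) : n μ ν lam = 1 := by
  have hmax : ∀ κ ∈ (n μ ν).support, DomLe l lam κ → κ = lam := fun κ hκ hle =>
    Subtype.ext
      (domLe_antisymm (h ▸ domLe_of_mem_support_structureConst hlead hsupp hn μ ν hκ) hle)
  have := coeff_sum_smul_of_maximal hlead hsupp _ hmax
  rw [← hn] at this
  rw [← this, ← h, coeff_mul_add_of_domLe (domLe_of_coeff_ne_zero hsupp μ)
    (domLe_of_coeff_ne_zero hsupp ν), hlead, hlead, mul_one]

lemma eq_mul_sub_sum_erase (hlead : ∀ lam : Dom l, (f ↑lam).coeff ↑lam = 1)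
    (hsupp : ∀ lam : Dom l, ∀ x, x ∉ SatSet l ↑lam → (f ↑lam).coeff x = 0)
    {n : Dom l → Dom l → (Dom l →₀ ℤ)}
    (hn : ∀ μ ν : Dom l, f ↑μ * f ↑ν = (n μ ν).sum fun lam z => z • f ↑lam)
    {μ ν lam : Dom l} (h : (μ + ν : WeightA l) = lam) :
    f lam = f μ * f ν - ∑ κ ∈ (n μ ν).support.erase lam, n μ ν κ • f κ := by
  have hone := structureConst_eq_one hlead hsupp hn h
  have hmem : lam ∈ (n μ ν).support := Finsupp.mem_support_iff.mpr (by simp [hone])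
  rw [hn, Finsupp.sum, ← Finset.add_sum_erase _ _ hmem, hone, one_smul, add_sub_cancel_right]

end Characters

lemma induction_on_height {P : Dom l → Prop}
    (step : ∀ lam : Dom l, (∀ κ : Dom l, height l κ < height l lam → P κ) → P lam)
    (lam : Dom l) : P lam :=
  (measure fun κ : Dom l => (height l κ).toNat).wf.induction lam fun lam ih =>
    step lam fun κ hκ => ih κ <| by
      have := height_nonneg_of_isDominant κ.2
      show (height l κ).toNat < (height l lam).toNat
      omega

lemma eq_of_forall_height_lt {f f' : WeightA l → AddMonoidAlgebra ℤ (WeightA l)}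
    (hWf : ∀ lam : Dom l, ∀ j, Finsupp.mapDomain (reflect l j) (f ↑lam).coeff = (f ↑lam).coeff)
    (hWf' : ∀ lam : Dom l, ∀ j, Finsupp.mapDomain (reflect l j) (f' ↑lam).coeff = (f' ↑lam).coeff)
    (hlead : ∀ lam : Dom l, (f ↑lam).coeff ↑lam = 1)
    (hlead' : ∀ lam : Dom l, (f' ↑lam).coeff ↑lam = 1)
    (hsupp : ∀ lam : Dom l, ∀ x, x ∉ SatSet l ↑lam → (f ↑lam).coeff x = 0)
    (hsupp' : ∀ lam : Dom l, ∀ x, x ∉ SatSet l ↑lam → (f' ↑lam).coeff x = 0)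
    {n : Dom l → Dom l → (Dom l →₀ ℤ)}
    (hn : ∀ μ ν : Dom l, f ↑μ * f ↑ν = (n μ ν).sum fun lam z => z • f ↑lam)
    (hn' : ∀ μ ν : Dom l, f' ↑μ * f' ↑ν = (n μ ν).sum fun lam z => z • f' ↑lam)
    (lam : Dom l) (ih : ∀ κ : Dom l, height l κ < height l lam → f κ = f' κ) :
    f lam = f' lam := by
  by_cases hmin : IsMinimalDominant l lam
  · exact eq_of_isMinimalDominant hmin (hWf lam) (hWf' lam) ((hlead lam).trans (hlead' lam).symm)
      (hsupp lam) (hsupp' lam)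
  obtain ⟨μ, ν, hμ, hν, hμ₀, hν₀, hsum⟩ := exists_add_of_not_isMinimalDominant lam.2 hmin
  have hheight : height l lam = height l μ + height l ν := by rw [← hsum, map_add]
  have := height_pos_of_isDominant hμ hμ₀
  have := height_pos_of_isDominant hν hν₀
  have hsmaller : ∀ κ ∈ (n ⟨μ, hμ⟩ ⟨ν, hν⟩).support.erase lam, f κ = f' κ := fun κ hκ =>
    ih κ (height_lt_of_domLe (hsum ▸ domLe_of_mem_support_structureConst hlead hsupp hn _ _
      (Finset.mem_of_mem_erase hκ)) fun h => Finset.ne_of_mem_erase hκ (Subtype.ext h))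
  rw [eq_mul_sub_sum_erase hlead hsupp hn (μ := ⟨μ, hμ⟩) (ν := ⟨ν, hν⟩) hsum,
    eq_mul_sub_sum_erase hlead' hsupp' hn' (μ := ⟨μ, hμ⟩) (ν := ⟨ν, hν⟩) hsum,
    ih ⟨μ, hμ⟩ (by simp only; omega), ih ⟨ν, hν⟩ (by simp only; omega),
    Finset.sum_congr rfl fun κ hκ => by rw [hsmaller κ hκ]]

end TypeA

theorem coefficients_iff_structure_constants_general (l : ℕ)
    (f f' : WeightA l → AddMonoidAlgebra ℤ (WeightA l))
    (hWf : ∀ lam : Dom l, ∀ j, Finsupp.mapDomain (reflect l j) (f ↑lam).coeff = (f ↑lam).coeff)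
    (hWf' : ∀ lam : Dom l, ∀ j, Finsupp.mapDomain (reflect l j) (f' ↑lam).coeff = (f' ↑lam).coeff)
    (hlead : ∀ lam : Dom l, (f ↑lam).coeff ↑lam = 1)
    (hlead' : ∀ lam : Dom l, (f' ↑lam).coeff ↑lam = 1)
    (hsupp : ∀ lam : Dom l, ∀ x, x ∉ SatSet l ↑lam → (f ↑lam).coeff x = 0)
    (hsupp' : ∀ lam : Dom l, ∀ x, x ∉ SatSet l ↑lam → (f' ↑lam).coeff x = 0)
    (n n' : Dom l → Dom l → (Dom l →₀ ℤ))
    (hn : ∀ μ ν : Dom l, f ↑μ * f ↑ν = (n μ ν).sum fun lam z => z • f ↑lam)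
    (hn' : ∀ μ ν : Dom l, f' ↑μ * f' ↑ν = (n' μ ν).sum fun lam z => z • f' ↑lam) :
    ((∀ lam : Dom l, f ↑lam = f' ↑lam) → n = n') ∧
    ((n = n') → ∀ lam : Dom l, f ↑lam = f' ↑lam) := by
  refine ⟨fun hff => ?_, fun hnn => ?_⟩
  · funext μ ν
    refine TypeA.eq_of_sum_smul_eq hlead hsupp ?_
    rw [← hn]
    simp only [hff]
    exact hn' μ ν
  · subst hnn
    exact TypeA.induction_on_height
      (TypeA.eq_of_forall_height_lt hWf hWf' hlead hlead' hsupp hsupp' hn hn')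

theorem coefficients_iff_structure_constants (l : ℕ)
    (huniq : ∀ μ ν : WeightA l, IsDominant l μ → IsDominant l ν →
      SameOrbit l μ ν → μ = ν)
    (f f' : WeightA l → AddMonoidAlgebra ℤ (WeightA l))
    (hWf : ∀ lam : Dom l, ∀ j, Finsupp.mapDomain (reflect l j) (f ↑lam).coeff = (f ↑lam).coeff)
    (hWf' : ∀ lam : Dom l, ∀ j, Finsupp.mapDomain (reflect l j) (f' ↑lam).coeff = (f' ↑lam).coeff)
    (hlead : ∀ lam : Dom l, (f ↑lam).coeff ↑lam = 1)
    (hlead' : ∀ lam : Dom l, (f' ↑lam).coeff ↑lam = 1)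
    (hsupp : ∀ lam : Dom l, ∀ x, x ∉ SatSet l ↑lam → (f ↑lam).coeff x = 0)
    (hsupp' : ∀ lam : Dom l, ∀ x, x ∉ SatSet l ↑lam → (f' ↑lam).coeff x = 0)
    (n n' : Dom l → Dom l → (Dom l →₀ ℤ))
    (hn : ∀ μ ν : Dom l, f ↑μ * f ↑ν = (n μ ν).sum fun lam z => z • f ↑lam)
    (hn' : ∀ μ ν : Dom l, f' ↑μ * f' ↑ν = (n' μ ν).sum fun lam z => z • f' ↑lam) :
    ((∀ lam : Dom l, f ↑lam = f' ↑lam) → n = n') ∧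
    ((n = n') → ∀ lam : Dom l, f ↑lam = f' ↑lam) :=
  coefficients_iff_structure_constants_general l f f' hWf hWf' hlead hlead' hsupp hsupp' n n' hn hn'
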